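/- Let G be a local group, H an abstract group, and ι : G → H a map such that whenever (x,y) ∈ Ω_G, ι(xy) = ι(x)ι(y) (a morphism from the discrete local group underlying G into the discrete group H). Suppose H is generated by ι(G). Then there is a unique group topology on H such that ι : G → H is continuous and open onto its image (i.e., the images ι(U) of open neighborhoods U of 1 in G form a neighborhood base at the identity of H). -/

import Mathlib

open scoped Topology

universe u v

section LocalGroupBasics

variable {G : Type u} {G' : Type v}

/-- A subset `X` of `G` is *symmetric* if `X = X⁻¹`, i.e. membership in `X` is
invariant under the inversion map. -/
def IsSymmetricSet (inv : G → G) (X : Set G) : Prop := ∀ x, x ∈ X ↔ inv x ∈ X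

/-- The data `(one, inv, dom, mul)` on a topological space `G` is a *local group*:
`G` is Hausdorff, `dom ⊆ G × G` is open, inversion is continuous, multiplication is
continuous on `dom`, and the identity, inverse and (local) associativity axioms hold.
(Here `mul` is a total function, but its values outside `dom` are irrelevant:
all axioms refer only to products taken inside `dom`.) -/
structure IsLocalGroup [TopologicalSpace G] (one : G) (inv : G → G)
    (dom : Set (G × G)) (mul : G → G → G) : Prop where
  t2 : T2Space G
  isOpen_dom : IsOpen dom
  continuous_inv : Continuous inv
  continuousOn_mul : ContinuousOn (fun p : G × G => mul p.1 p.2) dom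
  mem_one_left : ∀ x : G, (one, x) ∈ dom
  mem_one_right : ∀ x : G, (x, one) ∈ dom
  one_mul : ∀ x : G, mul one x = x
  mul_one : ∀ x : G, mul x one = x
  mem_inv_left : ∀ x : G, (inv x, x) ∈ dom
  mem_inv_right : ∀ x : G, (x, inv x) ∈ dom
  inv_mul : ∀ x : G, mul (inv x) x = one
  mul_inv : ∀ x : G, mul x (inv x) = one
  assoc : ∀ x y z : G, (x, y) ∈ dom → (y, z) ∈ dom →
    ((mul x y, z) ∈ dom ∨ (x, mul y z) ∈ dom) →
    (mul x y, z) ∈ dom ∧ (x, mul y z) ∈ dom ∧ mul (mul x y) z = mul x (mul y z)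

/-- `abc` is defined: `(a,b) ∈ Ω`, `(b,c) ∈ Ω` and `(ab,c) ∈ Ω`. -/
def TripleDefined (dom : Set (G × G)) (mul : G → G → G) (a b c : G) : Prop :=
  (a, b) ∈ dom ∧ (b, c) ∈ dom ∧ (mul a b, c) ∈ dom

/-- A *subgroup* of the local group: a symmetric subset `H` with `1 ∈ H`,
`H × H ⊆ Ω` and `xy ∈ H` for all `x, y ∈ H`. -/
def IsLGSubgroup (one : G) (inv : G → G) (dom : Set (G × G)) (mul : G → G → G)
    (H : Set G) : Prop :=
  IsSymmetricSet inv H ∧ one ∈ H ∧ ∀ x ∈ H, ∀ y ∈ H, (x, y) ∈ dom ∧ mul x y ∈ H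

/-- A *normal subgroup* of the local group: a subgroup `N` such that for all `x ∈ N`
and all `a ∈ G`, `a * x * a⁻¹` is defined and lies in `N`. -/
def IsLGNormalSubgroup (one : G) (inv : G → G) (dom : Set (G × G)) (mul : G → G → G)
    (N : Set G) : Prop :=
  IsLGSubgroup one inv dom mul N ∧
    ∀ x ∈ N, ∀ a : G, TripleDefined dom mul a x (inv a) ∧ mul (mul a x) (inv a) ∈ N

/-- A *morphism* of local groups: a continuous map `φ` such that whenever
`(x,y) ∈ Ω_G`, also `(φ x, φ y) ∈ Ω_{G'}` and `φ(xy) = φ(x)φ(y)`. -/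
def IsLGHom [TopologicalSpace G] [TopologicalSpace G'] (dom : Set (G × G))
    (mul : G → G → G) (dom' : Set (G' × G')) (mul' : G' → G' → G') (φ : G → G') : Prop :=
  Continuous φ ∧
    ∀ x y : G, (x, y) ∈ dom → (φ x, φ y) ∈ dom' ∧ φ (mul x y) = mul' (φ x) (φ y)

/-- A morphism is *strong* if `(φ x, φ y) ∈ Ω_{G'}` implies `(x, y) ∈ Ω_G`. -/
def IsStrong (dom : Set (G × G)) (dom' : Set (G' × G')) (φ : G → G') : Prop :=
  ∀ x y : G, (φ x, φ y) ∈ dom' → (x, y) ∈ dom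

/-- An *isomorphism* of local groups: a morphism with a two-sided inverse that is
also a morphism. -/
def IsLGIso [TopologicalSpace G] [TopologicalSpace G'] (dom : Set (G × G))
    (mul : G → G → G) (dom' : Set (G' × G')) (mul' : G' → G' → G') (φ : G → G') : Prop :=
  IsLGHom dom mul dom' mul' φ ∧
    ∃ ψ : G' → G, IsLGHom dom' mul' dom mul ψ ∧
      Function.LeftInverse ψ φ ∧ Function.RightInverse ψ φ

/-- A map `ι : G → G'` is *open onto its image* if the image of every open set
is open in the subspace `ι(G)` of `G'`. -/
def IsOpenOntoImage [TopologicalSpace G] [TopologicalSpace G'] (ι : G → G') : Prop :=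
  ∀ O : Set G, IsOpen O → ∃ O' : Set G', IsOpen O' ∧ O' ∩ Set.range ι = ι '' O

end LocalGroupBasics

section Restriction

variable {G : Type u}

/-- The identity of the restriction `G|U`. -/
def restrictOne (one : G) (U : Set G) (h : one ∈ U) : ↥U := ⟨one, h⟩

open Classical in
/-- The inversion of the restriction `G|U` (with an irrelevant junk value on
points whose inverse falls outside `U`; when `U` is symmetric this never happens). -/
noncomputable def restrictInv (inv : G → G) (U : Set G) : ↥U → ↥U := fun x =>
  if h : inv ↑x ∈ U then ⟨inv ↑x, h⟩ else x

/-- The domain `Ω_U = {(x,y) ∈ Ω ∩ (U × U) : xy ∈ U}` of the restriction `G|U`. -/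
def restrictDom (dom : Set (G × G)) (mul : G → G → G) (U : Set G) : Set (↥U × ↥U) :=
  {p | ((p.1 : G), (p.2 : G)) ∈ dom ∧ mul ↑p.1 ↑p.2 ∈ U}

open Classical in
/-- The product of the restriction `G|U` (with an irrelevant junk value outside
`Ω_U`). -/
noncomputable def restrictMul (mul : G → G → G) (U : Set G) : ↥U → ↥U → ↥U := fun x y =>
  if h : mul ↑x ↑y ∈ U then ⟨mul ↑x ↑y, h⟩ else x

end Restriction

section Cosets

variable {G : Type u}

/-- The left coset `aN`. -/
def lCoset (mul : G → G → G) (N : Set G) (a : G) : Set G := {y | ∃ x ∈ N, y = mul a x}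

/-- The right coset `Na`. -/
def rCoset (mul : G → G → G) (N : Set G) (a : G) : Set G := {y | ∃ x ∈ N, y = mul x a}

/-- The underlying set `{aN : a ∈ G}` of the quotient `G/N`. -/
def Cosets (mul : G → G → G) (N : Set G) : Type u :=
  {A : Set G // ∃ a : G, A = lCoset mul N a}

/-- The canonical map `π : G → G/N`, `π(a) = aN`. -/
def cosetMap (mul : G → G → G) (N : Set G) (a : G) : Cosets mul N :=
  ⟨lCoset mul N a, a, rfl⟩

/-- The quotient topology on `G/N`. -/
def cosetTop [t : TopologicalSpace G] (mul : G → G → G) (N : Set G) :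
    TopologicalSpace (Cosets mul N) :=
  t.coinduced (cosetMap mul N)

/-- The domain `Ω_{G/N} = {(aN, bN) : (a,b) ∈ Ω}` of the quotient `G/N`. -/
def cosetDom (dom : Set (G × G)) (mul : G → G → G) (N : Set G) :
    Set (Cosets mul N × Cosets mul N) :=
  {p | ∃ a b : G, (a, b) ∈ dom ∧ p = (cosetMap mul N a, cosetMap mul N b)}

end Cosets

section NSS

/-- A local group has *no small subgroups* (NSS) if some neighborhood of the
identity contains no subgroup other than `{1}`. (The topology is an explicit
argument, so that this can be applied to quotient topologies.) -/
def HasNSS {G : Type u} (t : TopologicalSpace G) (one : G) (inv : G → G)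
    (dom : Set (G × G)) (mul : G → G → G) : Prop :=
  ∃ W ∈ @nhds G t one, ∀ K : Set G, IsLGSubgroup one inv dom mul K → K ⊆ W → K = {one}

end NSS

section TopGroup

/-- `H`, with a given group structure and topology, is a topological group whose
operations are compatible with the ambient local group data on `G ⊇ H`. -/
def GroupStructureCompatible {G : Type u} [TopologicalSpace G] (one : G) (inv : G → G)
    (mul : G → G → G) (H : Set G) [Group ↥H] : Prop :=
  (((1 : ↥H) : G) = one) ∧ (∀ a b : ↥H, ((a * b : ↥H) : G) = mul ↑a ↑b) ∧
    (∀ a : ↥H, ((a⁻¹ : ↥H) : G) = inv ↑a) ∧ IsTopologicalGroup ↥H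

/-- The restriction `G|U` is isomorphic, as a local group, to the restriction `H|V`
of the (Hausdorff) topological group `H` to some symmetric open neighborhood `V` of
its identity. -/
def IsoToGroupRestriction {G : Type u} [TopologicalSpace G]
    (dom : Set (G × G)) (mul : G → G → G) (U : Set G)
    (H : Type u) [TopologicalSpace H] [Group H] : Prop :=
  IsTopologicalGroup H ∧ T2Space H ∧
    ∃ V : Set H, IsOpen V ∧ (1 : H) ∈ V ∧ IsSymmetricSet (fun h => h⁻¹) V ∧
      ∃ φ : ↥U → ↥V,
        IsLGIso (restrictDom dom mul U) (restrictMul mul U)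
          (restrictDom Set.univ (fun a b : H => a * b) V)
          (restrictMul (fun a b : H => a * b) V) φ

/-- The local group `(G, one, inv, dom, mul)` is *locally isomorphic to a
topological group*: some restriction of it is isomorphic, as a local group, to a
restriction of a (Hausdorff) topological group. -/
def LocallyIsoToTopGroup {G : Type u} [TopologicalSpace G] (one : G) (inv : G → G)
    (dom : Set (G × G)) (mul : G → G → G) : Prop :=
  ∃ U : Set G, IsOpen U ∧ one ∈ U ∧ IsSymmetricSet inv U ∧
    ∃ (H : Type u) (tH : TopologicalSpace H) (gH : Group H),
      @IsoToGroupRestriction G _ dom mul U H tH gH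

end TopGroup

/-!
The images `ι(U)` of the neighbourhoods `U` of `1` in `G` are the sets of the filter
`map ι (𝓝 1)`. Since `ι` is multiplicative on `Ω`, continuity of the local product and
inversion at the identity become the axioms of the neighbourhood filter of `1` in a group
topology, except invariance under conjugation: that holds for conjugation by `ι a` because
`a x a⁻¹` is defined and continuous in `x` near `1`, and it then passes to the group generated by
`ι(G)`, which is all of `H`. Uniqueness holds because a group topology is determined by its
neighbourhoods of `1`.
-/

open Filter

namespace GroupFilterBasis

variable {H : Type*} [Group H]

def ofFilter (F : Filter H) (one_le : pure 1 ≤ F)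
    (tendsto_mul : Tendsto (fun p : H × H => p.1 * p.2) (F ×ˢ F) F)
    (tendsto_inv : Tendsto (fun x : H => x⁻¹) F F)
    (tendsto_conj : ∀ x₀ : H, Tendsto (fun x => x₀ * x * x₀⁻¹) F F) :
    GroupFilterBasis H where
  toFilterBasis := F.asBasis
  one' hU := one_le hU
  mul' hU := by
    obtain ⟨V, hV, hVU⟩ := mem_prod_self_iff.mp (tendsto_mul hU)
    exact ⟨V, hV, Set.mul_subset_iff.mpr fun x hx y hy => hVU (Set.mk_mem_prod hx hy)⟩
  inv' hU := ⟨_, tendsto_inv hU, subset_rfl⟩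
  conj' x₀ _ hU := ⟨_, tendsto_conj x₀ hU, subset_rfl⟩

theorem nhds_one_ofFilter {F : Filter H} (one_le : pure 1 ≤ F)
    (tendsto_mul : Tendsto (fun p : H × H => p.1 * p.2) (F ×ˢ F) F)
    (tendsto_inv : Tendsto (fun x : H => x⁻¹) F F)
    (tendsto_conj : ∀ x₀ : H, Tendsto (fun x => x₀ * x * x₀⁻¹) F F) :
    @nhds H (ofFilter F one_le tendsto_mul tendsto_inv tendsto_conj).topology 1 = F := by
  rw [nhds_one_eq]
  exact asBasis_filter F

end GroupFilterBasis

theorem mem_map_nhds_iff_exists_isOpen_image_subset {X Y : Type*} [TopologicalSpace X]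
    {f : X → Y} {x : X} {s : Set Y} :
    s ∈ map f (𝓝 x) ↔ ∃ U : Set X, IsOpen U ∧ x ∈ U ∧ f '' U ⊆ s := by
  rw [mem_map, mem_nhds_iff]
  simp only [Set.image_subset_iff]
  exact ⟨fun ⟨U, hU, hUo, hxU⟩ => ⟨U, hUo, hxU, hU⟩,
    fun ⟨U, hUo, hxU, hU⟩ => ⟨U, hU, hUo, hxU⟩⟩

namespace IsLocalGroup

variable {G : Type u} [TopologicalSpace G] {one : G} {inv : G → G} {dom : Set (G × G)}
  {mul : G → G → G}

theorem inv_one (hG : IsLocalGroup one inv dom mul) : inv one = one := by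
  simpa only [hG.mul_one] using hG.inv_mul one

theorem continuousAt_mul (hG : IsLocalGroup one inv dom mul) {X : Type*} [TopologicalSpace X]
    {f g : X → G} {x : X} (hf : ContinuousAt f x) (hg : ContinuousAt g x)
    (hx : (f x, g x) ∈ dom) : ContinuousAt (fun y => mul (f y) (g y)) x :=
  ContinuousAt.comp (g := fun q : G × G => mul q.1 q.2) (f := fun y => (f y, g y))
    (hG.continuousOn_mul.continuousAt (hG.isOpen_dom.mem_nhds hx)) (hf.prodMk hg)

theorem tendsto_mul_nhds_one (hG : IsLocalGroup one inv dom mul) :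
    Tendsto (fun p : G × G => mul p.1 p.2) (𝓝 (one, one)) (𝓝 one) := by
  have h := hG.continuousAt_mul (x := (one, one)) continuousAt_fst continuousAt_snd
    (hG.mem_one_left one)
  rwa [ContinuousAt, hG.one_mul] at h

theorem tendsto_inv_nhds_one (hG : IsLocalGroup one inv dom mul) :
    Tendsto inv (𝓝 one) (𝓝 one) := by
  simpa only [hG.inv_one] using hG.continuous_inv.tendsto one

theorem continuousAt_mul_left (hG : IsLocalGroup one inv dom mul) (a : G) :
    ContinuousAt (fun v => mul a v) one :=
  hG.continuousAt_mul continuousAt_const continuousAt_id (hG.mem_one_right a)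

theorem eventually_conj_mem_dom (hG : IsLocalGroup one inv dom mul) (a : G) :
    ∀ᶠ v in 𝓝 one, (a, v) ∈ dom ∧ (mul a v, inv a) ∈ dom :=
  ((continuousAt_const.prodMk continuousAt_id).eventually_mem
    (hG.isOpen_dom.mem_nhds (hG.mem_one_right a))).and
    (((hG.continuousAt_mul_left a).prodMk continuousAt_const).eventually_mem
      (hG.isOpen_dom.mem_nhds ((hG.mul_one a).symm ▸ hG.mem_inv_right a)))

theorem tendsto_conj_nhds_one (hG : IsLocalGroup one inv dom mul) (a : G) :
    Tendsto (fun v => mul (mul a v) (inv a)) (𝓝 one) (𝓝 one) := by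
  have h := hG.continuousAt_mul (hG.continuousAt_mul_left a) continuousAt_const
    ((hG.mul_one a).symm ▸ hG.mem_inv_right a)
  rwa [ContinuousAt, hG.mul_one, hG.mul_inv] at h

variable {H : Type v} [Group H] {ι : G → H}

theorem map_one (hG : IsLocalGroup one inv dom mul)
    (hhom : ∀ x y : G, (x, y) ∈ dom → ι (mul x y) = ι x * ι y) : ι one = 1 := by
  simpa only [hG.one_mul, left_eq_mul] using hhom one one (hG.mem_one_left one)

theorem map_inv (hG : IsLocalGroup one inv dom mul)
    (hhom : ∀ x y : G, (x, y) ∈ dom → ι (mul x y) = ι x * ι y) (x : G) :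
    ι (inv x) = (ι x)⁻¹ := by
  have h := hhom x (inv x) (hG.mem_inv_right x)
  rw [hG.mul_inv, hG.map_one hhom] at h
  exact eq_inv_of_mul_eq_one_right h.symm

theorem pure_one_le_map_nhds_one (hG : IsLocalGroup one inv dom mul)
    (hhom : ∀ x y : G, (x, y) ∈ dom → ι (mul x y) = ι x * ι y) :
    pure 1 ≤ map ι (𝓝 one) := by
  rw [← hG.map_one hhom, ← map_pure]
  exact map_mono (pure_le_nhds one)

theorem tendsto_mul_map_nhds_one (hG : IsLocalGroup one inv dom mul)
    (hhom : ∀ x y : G, (x, y) ∈ dom → ι (mul x y) = ι x * ι y) :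
    Tendsto (fun p : H × H => p.1 * p.2) (map ι (𝓝 one) ×ˢ map ι (𝓝 one))
      (map ι (𝓝 one)) := by
  rw [prod_map_map_eq, ← nhds_prod_eq, tendsto_map'_iff]
  have hmul : ι ∘ (fun p : G × G => mul p.1 p.2) =ᶠ[𝓝 (one, one)]
      (fun p : H × H => p.1 * p.2) ∘ fun p => (ι p.1, ι p.2) := by
    filter_upwards [hG.isOpen_dom.mem_nhds (hG.mem_one_left one)] with p hp
    exact hhom _ _ hp
  exact (tendsto_map.comp hG.tendsto_mul_nhds_one).congr' hmul

theorem tendsto_inv_map_nhds_one (hG : IsLocalGroup one inv dom mul)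
    (hhom : ∀ x y : G, (x, y) ∈ dom → ι (mul x y) = ι x * ι y) :
    Tendsto (fun x : H => x⁻¹) (map ι (𝓝 one)) (map ι (𝓝 one)) := by
  rw [tendsto_map'_iff]
  exact (tendsto_map.comp hG.tendsto_inv_nhds_one).congr (hG.map_inv hhom)

theorem tendsto_conj_map_nhds_one_of_mem_range (hG : IsLocalGroup one inv dom mul)
    (hhom : ∀ x y : G, (x, y) ∈ dom → ι (mul x y) = ι x * ι y) {x₀ : H}
    (hx₀ : x₀ ∈ Set.range ι) :
    Tendsto (fun x => x₀ * x * x₀⁻¹) (map ι (𝓝 one)) (map ι (𝓝 one)) := by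
  obtain ⟨a, rfl⟩ := hx₀
  rw [tendsto_map'_iff]
  have hconj : ι ∘ (fun v => mul (mul a v) (inv a)) =ᶠ[𝓝 one]
      (fun x => ι a * x * (ι a)⁻¹) ∘ ι := by
    filter_upwards [hG.eventually_conj_mem_dom a] with v ⟨hav, hava⟩
    simp only [Function.comp, hhom _ _ hava, hhom _ _ hav, hG.map_inv hhom]
  exact (tendsto_map.comp (hG.tendsto_conj_nhds_one a)).congr' hconj

theorem tendsto_conj_map_nhds_one (hG : IsLocalGroup one inv dom mul)
    (hhom : ∀ x y : G, (x, y) ∈ dom → ι (mul x y) = ι x * ι y)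
    (hgen : Subgroup.closure (Set.range ι) = ⊤) (x₀ : H) :
    Tendsto (fun x => x₀ * x * x₀⁻¹) (map ι (𝓝 one)) (map ι (𝓝 one)) := by
  have hx₀ : x₀ ∈ Subgroup.closure (Set.range ι) := hgen ▸ Subgroup.mem_top x₀
  induction hx₀ using Subgroup.closure_induction'' with
  | mem _ hx => exact hG.tendsto_conj_map_nhds_one_of_mem_range hhom hx
  | inv_mem _ hx =>
    obtain ⟨a, rfl⟩ := hx
    exact hG.tendsto_conj_map_nhds_one_of_mem_range hhom ⟨inv a, hG.map_inv hhom a⟩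
  | one => exact tendsto_id.congr fun x => by simp
  | mul x y _ _ hx hy =>
    refine (hx.comp hy).congr fun z => ?_
    simp only [Function.comp_apply, mul_inv_rev, mul_assoc]

end IsLocalGroup

/-- Lemma 3.2. Let `G` be a local group, `H` an abstract group,
and `ι : G → H` a map which is a morphism from the discrete local group underlying
`G` to `H`, whose image generates `H`. Then there is a unique group topology on `H`
for which the images `ι(U)` of the open neighborhoods `U` of `1` in `G` form a
neighborhood base at the identity of `H`. -/
theorem unique_group_topology
    {G : Type u} [TopologicalSpace G] (one : G) (inv : G → G)
    (dom : Set (G × G)) (mul : G → G → G)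
    (hG : IsLocalGroup one inv dom mul)
    {H : Type v} [Group H] (ι : G → H)
    (hhom : ∀ x y : G, (x, y) ∈ dom → ι (mul x y) = ι x * ι y)
    (hgen : Subgroup.closure (Set.range ι) = ⊤) :
    ∃! t : TopologicalSpace H, @IsTopologicalGroup H t _ ∧
      ∀ s : Set H, s ∈ @nhds H t 1 ↔ ∃ U : Set G, IsOpen U ∧ one ∈ U ∧ ι '' U ⊆ s := by
  let B := GroupFilterBasis.ofFilter (map ι (𝓝 one)) (hG.pure_one_le_map_nhds_one hhom)
    (hG.tendsto_mul_map_nhds_one hhom) (hG.tendsto_inv_map_nhds_one hhom)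
    (hG.tendsto_conj_map_nhds_one hhom hgen)
  refine ⟨B.topology, ⟨B.isTopologicalGroup, fun s => ?_⟩, fun t ⟨htg, ht⟩ => ?_⟩
  · rw [GroupFilterBasis.nhds_one_ofFilter, mem_map_nhds_iff_exists_isOpen_image_subset]
  · refine htg.ext B.isTopologicalGroup ?_
    rw [GroupFilterBasis.nhds_one_ofFilter]
    ext s
    rw [ht, mem_map_nhds_iff_exists_isOpen_image_subset]
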